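/- Let B ∈ (ℝ ∪ {−∞})^{n×n} satisfy Tr(B) ≤ 𝟙, let p ∈ (ℝ ∪ {−∞})ⁿ be a nonzero vector, let q, h ∈ ℝⁿ be regular vectors, and let g ∈ (ℝ ∪ {−∞})ⁿ satisfy h⁻ B* g ≤ 𝟙. Set θ = (q⁻ B* p)^{1/2} ⊕ h⁻ B* p ⊕ q⁻ B* g. Then the minimum of x⁻ p ⊕ q⁻ x over all regular vectors x ∈ ℝⁿ satisfying B x ⊕ g ≤ x and x ≤ h equals θ, and a regular vector x satisfying these constraints attains this minimum if and only if x = B* u for some vector u with g ⊕ θ⁻¹ p ≤ u ≤ ((h⁻ ⊕ θ⁻¹ q⁻) B*)⁻, where θ⁻¹ = −θ. -/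

import Mathlib

open Finset

noncomputable section

namespace MaxPlus

/-- Max-plus multiplicative inverse: `-a` for real `a`, `⊥` for `⊥`. -/
def tinv (a : WithBot ℝ) : WithBot ℝ := WithBot.map (fun r => -r) a

/-- Max-plus rational power `a^(1/k) = a / k`. -/
def trt (a : WithBot ℝ) (k : ℕ) : WithBot ℝ := WithBot.map (fun r => r / (k : ℝ)) a

/-- A vector is regular if it has no `⊥` (= -∞) entries. -/
def Reg {n : ℕ} (x : Fin n → WithBot ℝ) : Prop := ∀ i, x i ≠ ⊥

/-- `cdot q x = q⁻ x`, the max-plus product of the conjugate row vector `q⁻` with `x`. -/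
def cdot {n : ℕ} (q x : Fin n → WithBot ℝ) : WithBot ℝ :=
  Finset.univ.sup fun i => tinv (q i) + x i

/-- Max-plus matrix-vector product. -/
def mulVec {m n : ℕ} (A : Matrix (Fin m) (Fin n) (WithBot ℝ)) (x : Fin n → WithBot ℝ) :
    Fin m → WithBot ℝ := fun i => Finset.univ.sup fun j => A i j + x j

/-- Max-plus matrix product. -/
def tmul {l m n : ℕ} (A : Matrix (Fin l) (Fin m) (WithBot ℝ))
    (B : Matrix (Fin m) (Fin n) (WithBot ℝ)) : Matrix (Fin l) (Fin n) (WithBot ℝ) :=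
  fun i j => Finset.univ.sup fun k => A i k + B k j

/-- Multiplicative conjugate transpose of a matrix. -/
def conjM {m n : ℕ} (A : Matrix (Fin m) (Fin n) (WithBot ℝ)) :
    Matrix (Fin n) (Fin m) (WithBot ℝ) := fun i j => tinv (A j i)

/-- Max-plus identity matrix. -/
def tId {n : ℕ} : Matrix (Fin n) (Fin n) (WithBot ℝ) := fun i j => if i = j then 0 else ⊥

/-- Max-plus matrix power. -/
def tpow {n : ℕ} (A : Matrix (Fin n) (Fin n) (WithBot ℝ)) : ℕ → Matrix (Fin n) (Fin n) (WithBot ℝ)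
  | 0 => tId
  | k + 1 => tmul A (tpow A k)

/-- Max-plus trace. -/
def ttr {n : ℕ} (A : Matrix (Fin n) (Fin n) (WithBot ℝ)) : WithBot ℝ :=
  Finset.univ.sup fun i => A i i

/-- `Tr(A) = tr A ⊕ tr A² ⊕ ⋯ ⊕ tr Aⁿ`. -/
def TrOp {n : ℕ} (A : Matrix (Fin n) (Fin n) (WithBot ℝ)) : WithBot ℝ :=
  (Finset.Icc 1 n).sup fun m => ttr (tpow A m)

/-- Kleene star `A* = I ⊕ A ⊕ ⋯ ⊕ A^(n-1)`. -/
def kstar {n : ℕ} (A : Matrix (Fin n) (Fin n) (WithBot ℝ)) : Matrix (Fin n) (Fin n) (WithBot ℝ) :=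
  fun i j => (Finset.range n).sup fun k => tpow A k i j

/-- Max-plus spectral radius `λ = ⊕_{m=1}^n (tr A^m)^(1/m)`. -/
def specRad {n : ℕ} (A : Matrix (Fin n) (Fin n) (WithBot ℝ)) : WithBot ℝ :=
  (Finset.Icc 1 n).sup fun m => trt (ttr (tpow A m)) m

/-- `prodAB A B [i₁, …, i_k] = A B^{i₁} A B^{i₂} ⋯ A B^{i_k}`. -/
def prodAB {n : ℕ} (A B : Matrix (Fin n) (Fin n) (WithBot ℝ)) :
    List ℕ → Matrix (Fin n) (Fin n) (WithBot ℝ)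
  | [] => tId
  | i :: t => tmul (tmul A (tpow B i)) (prodAB A B t)

/-- The all-ones (all-`𝟙 = 0`) vector. -/
def onesV (n : ℕ) : Fin n → WithBot ℝ := fun _ => 0

end MaxPlus

/-!
Because `Tr B ≤ 𝟙`, every walk of length `n` in the digraph of `B` contains a cycle of
nonpositive weight, so `Bⁿ ≤ B*` and `B B* ≤ B*`: the solutions of `B x ≤ x` are exactly the
vectors `x = B* u`. For such a regular `x` one has `B* ≤ x x⁻`, whence
`q⁻ B* p ≤ (q⁻ x)(x⁻ p)`, `h⁻ B* p ≤ x⁻ p` (using `x ≤ h`) and `q⁻ B* g ≤ q⁻ x` (using `g ≤ x`),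
so the objective is at least `θ`. Conversely the objective of `x = B* u` is at most `θ` iff
`θ⁻¹ p ≤ x`, `q⁻ x ≤ θ`, and by residuation the conditions `B* u ≤ h`, `q⁻ B* u ≤ θ` say
exactly `u ≤ ((h⁻ ⊕ θ⁻¹ q⁻) B*)⁻`. The hypothesis on `g` and the three terms of `θ` make
this upper bound lie above `g ⊕ θ⁻¹ p`, and it yields a minimizer.
-/

namespace MaxPlus

@[simp] lemma tinv_coe (r : ℝ) : tinv (r : WithBot ℝ) = ((-r : ℝ) : WithBot ℝ) := rfl

@[simp] lemma tinv_bot : tinv ⊥ = ⊥ := rfl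

@[simp] lemma trt_coe (r : ℝ) (k : ℕ) : trt (r : WithBot ℝ) k = ((r / k : ℝ) : WithBot ℝ) := rfl

@[simp] lemma trt_bot (k : ℕ) : trt ⊥ k = ⊥ := rfl

lemma tinv_ne_bot {a : WithBot ℝ} (ha : a ≠ ⊥) : tinv a ≠ ⊥ := by
  induction a using WithBot.recBotCoe <;> simp_all

@[simp] lemma tinv_tinv (a : WithBot ℝ) : tinv (tinv a) = a := by
  induction a using WithBot.recBotCoe <;> simp

lemma tinv_add_le_iff {a b c : WithBot ℝ} (ha : a ≠ ⊥) : tinv a + b ≤ c ↔ b ≤ a + c := by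
  induction a using WithBot.recBotCoe with
  | bot => exact absurd rfl ha
  | coe r =>
    induction b using WithBot.recBotCoe with
    | bot => simp
    | coe s =>
      induction c using WithBot.recBotCoe with
      | bot => simp
      | coe t =>
        simp only [tinv_coe, ← WithBot.coe_add, WithBot.coe_le_coe]
        constructor <;> intro <;> linarith

lemma le_tinv_iff {a b : WithBot ℝ} (ha : a ≠ ⊥) : b ≤ tinv a ↔ a + b ≤ 0 := by
  rw [← tinv_tinv a, tinv_add_le_iff (tinv_ne_bot ha), tinv_tinv, add_zero]

lemma trt_two_le_iff {a b : WithBot ℝ} : trt a 2 ≤ b ↔ a ≤ b + b := by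
  induction a using WithBot.recBotCoe with
  | bot => simp
  | coe r =>
    induction b using WithBot.recBotCoe with
    | bot => simp
    | coe s =>
      simp only [trt_coe, ← WithBot.coe_add, WithBot.coe_le_coe]
      constructor <;> intro <;> push_cast at * <;> linarith

lemma add_sup_eq {ι : Type*} (a : WithBot ℝ) (s : Finset ι) (f : ι → WithBot ℝ) :
    a + s.sup f = s.sup fun i => a + f i := by
  simpa [Function.comp_def] using Finset.apply_sup_eq_sup_comp_of_linearOrder (a + ·)
    (fun _ _ h => add_le_add_right h a) (by simp)

lemma add_sup_le_iff {ι : Type*} {a b : WithBot ℝ} {s : Finset ι} {f : ι → WithBot ℝ} :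
    a + s.sup f ≤ b ↔ ∀ i ∈ s, a + f i ≤ b := by
  rw [add_sup_eq, Finset.sup_le_iff]

lemma tinv_add_nonpos_of_le {a b : WithBot ℝ} (h : b ≤ a) : tinv a + b ≤ 0 := by
  induction a using WithBot.recBotCoe with
  | bot => simp
  | coe r => exact (tinv_add_le_iff WithBot.coe_ne_bot).mpr (by rwa [add_zero])

lemma le_add_tinv_of_add_le {a b c : WithBot ℝ} (hb : b ≠ ⊥) (h : a + b ≤ c) : a ≤ c + tinv b := by
  rw [add_comm c, ← tinv_add_le_iff (tinv_ne_bot hb), tinv_tinv, add_comm]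
  exact h

variable {m n : ℕ}

lemma cdot_le_iff {q x : Fin n → WithBot ℝ} {c : WithBot ℝ} :
    cdot q x ≤ c ↔ ∀ i, tinv (q i) + x i ≤ c := by
  simp [cdot]

lemma le_cdot (q x : Fin n → WithBot ℝ) (i : Fin n) : tinv (q i) + x i ≤ cdot q x :=
  Finset.le_sup (f := fun i => tinv (q i) + x i) (Finset.mem_univ i)

lemma add_le_mulVec (A : Matrix (Fin m) (Fin n) (WithBot ℝ)) (u : Fin n → WithBot ℝ)
    (i : Fin m) (j : Fin n) : A i j + u j ≤ mulVec A u i :=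
  Finset.le_sup (f := fun j => A i j + u j) (Finset.mem_univ j)

lemma add_mulVec_le_iff {A : Matrix (Fin m) (Fin n) (WithBot ℝ)} {u : Fin n → WithBot ℝ}
    {i : Fin m} {a b : WithBot ℝ} : a + mulVec A u i ≤ b ↔ ∀ j, a + (A i j + u j) ≤ b := by
  simp [mulVec, add_sup_le_iff]

lemma mulVec_const_add (A : Matrix (Fin m) (Fin n) (WithBot ℝ)) (a : WithBot ℝ)
    (u : Fin n → WithBot ℝ) (i : Fin m) : mulVec A (fun j => a + u j) i = a + mulVec A u i := by
  simp only [mulVec, add_sup_eq, add_left_comm a]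

def vecMul (c : Fin m → WithBot ℝ) (A : Matrix (Fin m) (Fin n) (WithBot ℝ)) :
    Fin n → WithBot ℝ :=
  fun j => Finset.univ.sup fun i => c i + A i j

/-- Residuation: `A u ≤ c⁻` if and only if `u ≤ (c A)⁻`. -/
lemma le_tinv_vecMul_iff {c : Fin m → WithBot ℝ} {A : Matrix (Fin m) (Fin n) (WithBot ℝ)}
    (hc : ∀ j, vecMul c A j ≠ ⊥) {u : Fin n → WithBot ℝ} :
    (∀ j, u j ≤ tinv (vecMul c A j)) ↔ ∀ i, c i + mulVec A u i ≤ 0 := by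
  have entry : ∀ j, u j ≤ tinv (vecMul c A j) ↔ ∀ i, c i + (A i j + u j) ≤ 0 := fun j => by
    rw [le_tinv_iff (hc j), vecMul, add_comm, add_sup_le_iff]
    simp only [Finset.mem_univ, true_implies, add_comm (u j), add_assoc]
  simp only [entry, add_mulVec_le_iff]
  exact forall_comm

section KleeneStar

variable (B : Matrix (Fin n) (Fin n) (WithBot ℝ))

lemma kstar_diag_nonneg (i : Fin n) : 0 ≤ kstar B i i :=
  calc 0 = tpow B 0 i i := by simp [tpow, tId]
    _ ≤ kstar B i i := Finset.le_sup (f := fun k => tpow B k i i) (Finset.mem_range.mpr i.pos)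

lemma le_kstar_mulVec (u : Fin n → WithBot ℝ) (i : Fin n) : u i ≤ mulVec (kstar B) u i :=
  calc u i ≤ kstar B i i + u i := le_add_of_nonneg_left (kstar_diag_nonneg B i)
    _ ≤ mulVec (kstar B) u i := add_le_mulVec _ _ i i

lemma tpow_add_le_of_mulVec_le {x : Fin n → WithBot ℝ} (hx : ∀ i, mulVec B x i ≤ x i) :
    ∀ (m : ℕ) (i j : Fin n), tpow B m i j + x j ≤ x i
  | 0, i, j => by by_cases hij : i = j <;> simp [tpow, tId, hij]
  | m + 1, i, j => by
    simp only [tpow, tmul, add_comm _ (x j), add_sup_le_iff, Finset.mem_univ, true_implies]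
    intro k
    calc x j + (B i k + tpow B m k j) = B i k + (tpow B m k j + x j) := by ac_rfl
      _ ≤ B i k + x k := add_le_add_right (tpow_add_le_of_mulVec_le hx m k j) _
      _ ≤ x i := (add_le_mulVec B x i k).trans (hx i)

lemma kstar_add_le_of_mulVec_le {x : Fin n → WithBot ℝ} (hx : ∀ i, mulVec B x i ≤ x i)
    (i j : Fin n) : kstar B i j + x j ≤ x i := by
  rw [kstar, add_comm, add_sup_le_iff]
  intro m _
  rw [add_comm]
  exact tpow_add_le_of_mulVec_le B hx m i j

lemma kstar_mulVec_eq_self {x : Fin n → WithBot ℝ} (hx : ∀ i, mulVec B x i ≤ x i) :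
    mulVec (kstar B) x = x :=
  funext fun i => le_antisymm (Finset.sup_le fun j _ => kstar_add_le_of_mulVec_le B hx i j)
    (le_kstar_mulVec B x i)

/-- Weight of the walk `i → l₁ → l₂ → ⋯` in the digraph of `B`, or `⊥` unless it ends at `j`. -/
def walkWeight : Fin n → List (Fin n) → Fin n → WithBot ℝ
  | i, [], j => if i = j then 0 else ⊥
  | i, k :: l, j => B i k + walkWeight k l j

lemma walkWeight_le_tpow : ∀ (l : List (Fin n)) (i j : Fin n),
    walkWeight B i l j ≤ tpow B l.length i j
  | [], i, j => by simp [walkWeight, tpow, tId]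
  | k :: l, i, j =>
    calc B i k + walkWeight B k l j ≤ B i k + tpow B l.length k j :=
          add_le_add_right (walkWeight_le_tpow l k j) _
      _ ≤ tpow B (l.length + 1) i j :=
          Finset.le_sup (f := fun k => B i k + tpow B l.length k j) (Finset.mem_univ k)

lemma exists_tpow_le_walkWeight : ∀ (m : ℕ) (i j : Fin n),
    ∃ l : List (Fin n), l.length = m ∧ tpow B m i j ≤ walkWeight B i l j
  | 0, i, j => ⟨[], rfl, by simp [walkWeight, tpow, tId]⟩
  | m + 1, i, j => by
    obtain ⟨k, -, hk⟩ := Finset.exists_mem_eq_sup Finset.univ ⟨i, Finset.mem_univ i⟩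
      fun k => B i k + tpow B m k j
    obtain ⟨l, hl, hw⟩ := exists_tpow_le_walkWeight m k j
    refine ⟨k :: l, by simp [hl], ?_⟩
    rw [tpow, tmul, hk]
    exact add_le_add_right hw _

lemma walkWeight_append_cons : ∀ (l₁ : List (Fin n)) (k : Fin n) (l₂ : List (Fin n)) (i j : Fin n),
    walkWeight B i (l₁ ++ k :: l₂) j = walkWeight B i (l₁ ++ [k]) k + walkWeight B k l₂ j
  | [], k, l₂, i, j => by simp [walkWeight]
  | a :: l₁, k, l₂, i, j => by
    simp only [List.cons_append, walkWeight, walkWeight_append_cons l₁ k l₂ a j, add_assoc]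

variable {B}

lemma walkWeight_cycle_nonpos (hB : TrOp B ≤ 0) {l : List (Fin n)} (hl : l ≠ [])
    (hln : l.length ≤ n) (x : Fin n) : walkWeight B x l x ≤ 0 :=
  calc walkWeight B x l x ≤ tpow B l.length x x := walkWeight_le_tpow B l x x
    _ ≤ ttr (tpow B l.length) := Finset.le_sup (f := fun i => tpow B l.length i i)
        (Finset.mem_univ x)
    _ ≤ TrOp B := Finset.le_sup (f := fun m => ttr (tpow B m))
        (Finset.mem_Icc.mpr ⟨List.length_pos_iff.mpr hl, hln⟩)
    _ ≤ 0 := hB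

/-- A repeated vertex splits off a closed subwalk of length at most `n`, whose weight is
nonpositive because `Tr B ≤ 0`; cutting it out does not decrease the weight. -/
lemma exists_shorter_walkWeight_ge (hB : TrOp B ≤ 0) (j : Fin n) :
    ∀ (l : List (Fin n)) (i : Fin n), l.length ≤ n → ¬(i :: l).Nodup →
      ∃ l' : List (Fin n), l'.length < l.length ∧ walkWeight B i l j ≤ walkWeight B i l' j
  | [], i, _, hnd => absurd (List.nodup_singleton i) hnd
  | k :: l, i, hln, hnd => by
    rcases not_and_or.mp (List.nodup_cons.not.mp hnd) with hi | hnd'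
    · obtain ⟨l₁, l₂, hsplit⟩ := List.append_of_mem (not_not.mp hi)
      refine ⟨l₂, by simp [hsplit]; omega, ?_⟩
      rw [hsplit, walkWeight_append_cons]
      refine add_le_of_nonpos_left (walkWeight_cycle_nonpos hB (by simp) ?_ i)
      have := congrArg List.length hsplit
      simp at this hln ⊢
      omega
    · obtain ⟨l', hl', hw⟩ := exists_shorter_walkWeight_ge hB j l k (by simp at hln; omega) hnd'
      exact ⟨k :: l', by simp [hl'], add_le_add_right hw _⟩

lemma walkWeight_le_kstar (hB : TrOp B ≤ 0) (l : List (Fin n)) (hln : l.length ≤ n)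
    (i j : Fin n) : walkWeight B i l j ≤ kstar B i j := by
  induction hl : l.length using Nat.strong_induction_on generalizing l i with
  | _ m ih =>
    rcases hln.lt_or_eq with hlt | heq
    · exact (walkWeight_le_tpow B l i j).trans
        (Finset.le_sup (f := fun k => tpow B k i j) (Finset.mem_range.mpr hlt))
    · have hnd : ¬(i :: l).Nodup := fun hnd => by
        simpa [heq] using hnd.length_le_card
      obtain ⟨l', hl', hw⟩ := exists_shorter_walkWeight_ge hB j l i hln hnd
      exact hw.trans (ih _ (hl ▸ hl') l' (by omega) i rfl)

lemma add_kstar_le (hB : TrOp B ≤ 0) (i k j : Fin n) : B i k + kstar B k j ≤ kstar B i j := by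
  rw [kstar, add_sup_le_iff]
  intro m hm
  have hstep : B i k + tpow B m k j ≤ tpow B (m + 1) i j :=
    Finset.le_sup (f := fun k => B i k + tpow B m k j) (Finset.mem_univ k)
  refine hstep.trans ?_
  obtain ⟨l, hl, hw⟩ := exists_tpow_le_walkWeight B (m + 1) i j
  exact hw.trans (walkWeight_le_kstar hB l (by simp at hm; omega) i j)

lemma mulVec_kstar_mulVec_le (hB : TrOp B ≤ 0) (u : Fin n → WithBot ℝ) (i : Fin n) :
    mulVec B (mulVec (kstar B) u) i ≤ mulVec (kstar B) u i := by
  refine Finset.sup_le fun k _ => add_mulVec_le_iff.mpr fun j => ?_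
  calc B i k + (kstar B k j + u j) = (B i k + kstar B k j) + u j := (add_assoc _ _ _).symm
    _ ≤ kstar B i j + u j := add_le_add_left (add_kstar_le hB i k j) _
    _ ≤ mulVec (kstar B) u i := add_le_mulVec _ _ i j

lemma vecMul_kstar_ne_bot {c : Fin n → WithBot ℝ} (hc : ∀ j, c j ≠ ⊥) (j : Fin n) :
    vecMul c (kstar B) j ≠ ⊥ :=
  ne_bot_of_le_ne_bot (hc j) <| (le_add_of_nonneg_right (kstar_diag_nonneg B j)).trans <|
    Finset.le_sup (f := fun i => c i + kstar B i j) (Finset.mem_univ j)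

end KleeneStar

lemma cdot_ne_bot {q x : Fin n → WithBot ℝ} (hq : Reg q) {i : Fin n} (hx : x i ≠ ⊥) :
    cdot q x ≠ ⊥ :=
  ne_bot_of_le_ne_bot (WithBot.add_ne_bot.mpr ⟨tinv_ne_bot (hq i), hx⟩) (le_cdot q x i)

lemma cdot_le_iff_tinv_add_le {x p : Fin n → WithBot ℝ} {θ : WithBot ℝ} (hx : Reg x)
    (hθ : θ ≠ ⊥) : cdot x p ≤ θ ↔ ∀ j, tinv θ + p j ≤ x j := by
  simp only [cdot_le_iff, tinv_add_le_iff (hx _), tinv_add_le_iff hθ, add_comm θ]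

section SubsolutionBounds

variable {A : Matrix (Fin n) (Fin n) (WithBot ℝ)} {x : Fin n → WithBot ℝ}

lemma cdot_mulVec_le_add (hA : ∀ i j, A i j + x j ≤ x i) (hx : Reg x) (q p : Fin n → WithBot ℝ) :
    cdot q (mulVec A p) ≤ cdot q x + cdot x p := by
  refine cdot_le_iff.mpr fun i => add_mulVec_le_iff.mpr fun j => ?_
  calc tinv (q i) + (A i j + p j) ≤ tinv (q i) + ((x i + tinv (x j)) + p j) := by
        gcongr; exact le_add_tinv_of_add_le (hx j) (hA i j)
    _ = (tinv (q i) + x i) + (tinv (x j) + p j) := by ac_rfl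
    _ ≤ cdot q x + cdot x p := add_le_add (le_cdot q x i) (le_cdot x p j)

lemma cdot_mulVec_le_of_le (hA : ∀ i j, A i j + x j ≤ x i) (hx : Reg x)
    {h : Fin n → WithBot ℝ} (hxh : ∀ i, x i ≤ h i) (p : Fin n → WithBot ℝ) :
    cdot h (mulVec A p) ≤ cdot x p := by
  refine cdot_le_iff.mpr fun i => add_mulVec_le_iff.mpr fun j => ?_
  calc tinv (h i) + (A i j + p j) ≤ tinv (h i) + ((x i + tinv (x j)) + p j) := by
        gcongr; exact le_add_tinv_of_add_le (hx j) (hA i j)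
    _ = (tinv (h i) + x i) + (tinv (x j) + p j) := by ac_rfl
    _ ≤ 0 + cdot x p := add_le_add (tinv_add_nonpos_of_le (hxh i)) (le_cdot x p j)
    _ = cdot x p := zero_add _

lemma cdot_mulVec_le_cdot (hA : ∀ i j, A i j + x j ≤ x i) {g : Fin n → WithBot ℝ}
    (hgx : ∀ i, g i ≤ x i) (q : Fin n → WithBot ℝ) : cdot q (mulVec A g) ≤ cdot q x :=
  cdot_le_iff.mpr fun i => add_mulVec_le_iff.mpr fun j =>
    (add_le_add_right ((add_le_add_right (hgx j) _).trans (hA i j)) _).trans (le_cdot q x i)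

end SubsolutionBounds

/-- The vector `((h⁻ ⊕ θ⁻¹ q⁻) B*)⁻`. -/
def upperBound (B : Matrix (Fin n) (Fin n) (WithBot ℝ)) (h q : Fin n → WithBot ℝ)
    (θ : WithBot ℝ) (j : Fin n) : WithBot ℝ :=
  tinv (vecMul (fun i => tinv (h i) ⊔ (tinv θ + tinv (q i))) (kstar B) j)

section Problem

variable {B : Matrix (Fin n) (Fin n) (WithBot ℝ)} {p q h g x u : Fin n → WithBot ℝ}
  {θ : WithBot ℝ}

lemma le_objective_of_feasible (hx : Reg x) (hBx : ∀ i, mulVec B x i ⊔ g i ≤ x i)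
    (hxh : ∀ i, x i ≤ h i) :
    trt (cdot q (mulVec (kstar B) p)) 2 ⊔ cdot h (mulVec (kstar B) p)
      ⊔ cdot q (mulVec (kstar B) g) ≤ cdot x p ⊔ cdot q x := by
  have hK := kstar_add_le_of_mulVec_le B fun i => le_sup_left.trans (hBx i)
  refine sup_le (sup_le ?_ ?_) ?_
  · exact trt_two_le_iff.mpr <|
      (cdot_mulVec_le_add hK hx q p).trans (add_le_add le_sup_right le_sup_left)
  · exact (cdot_mulVec_le_of_le hK hx hxh p).trans le_sup_left
  · exact (cdot_mulVec_le_cdot hK (fun i => le_sup_right.trans (hBx i)) q).trans le_sup_right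

lemma upperBound_ne_bot (hh : Reg h) (j : Fin n) : upperBound B h q θ j ≠ ⊥ :=
  tinv_ne_bot <| vecMul_kstar_ne_bot
    (fun i => ne_bot_of_le_ne_bot (tinv_ne_bot (hh i)) le_sup_left) j

lemma le_upperBound_iff (hh : Reg h) (hθ : θ ≠ ⊥) :
    (∀ j, u j ≤ upperBound B h q θ j) ↔
      (∀ i, mulVec (kstar B) u i ≤ h i) ∧ cdot q (mulVec (kstar B) u) ≤ θ := by
  simp only [upperBound]
  rw [le_tinv_vecMul_iff
    (vecMul_kstar_ne_bot fun i => ne_bot_of_le_ne_bot (tinv_ne_bot (hh i)) le_sup_left)]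
  simp only [max_add, sup_le_iff, add_assoc, tinv_add_le_iff (hh _), tinv_add_le_iff hθ, add_zero,
    forall_and, cdot_le_iff]

lemma sup_tinv_add_le_upperBound (hh : Reg h) (hθ : θ ≠ ⊥) (hg : cdot h (mulVec (kstar B) g) ≤ 0)
    (hT : cdot h (mulVec (kstar B) p) ≤ θ) (hU : cdot q (mulVec (kstar B) g) ≤ θ)
    (hS : cdot q (mulVec (kstar B) p) ≤ θ + θ) (j : Fin n) :
    g j ⊔ (tinv θ + p j) ≤ upperBound B h q θ j := by
  have hgR := (le_upperBound_iff (u := g) hh hθ).mpr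
    ⟨fun i => by simpa [tinv_add_le_iff (hh i)] using (le_cdot h _ i).trans hg, hU⟩
  have hpR : ∀ j, tinv θ + p j ≤ upperBound B h q θ j :=
    (le_upperBound_iff hh hθ).mpr ⟨fun i => ?_, ?_⟩
  · exact sup_le (hgR j) (hpR j)
  · rw [mulVec_const_add, tinv_add_le_iff hθ, add_comm θ, ← tinv_add_le_iff (hh i)]
    exact (le_cdot h _ i).trans hT
  · refine cdot_le_iff.mpr fun i => ?_
    rw [mulVec_const_add, add_left_comm, tinv_add_le_iff hθ]
    exact (le_cdot q _ i).trans hS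

lemma feasible_of_mem_sandwich (hB : TrOp B ≤ 0) (hh : Reg h) (hθ : θ ≠ ⊥)
    (hx : Reg (mulVec (kstar B) u))
    (hu : ∀ j, g j ⊔ (tinv θ + p j) ≤ u j ∧ u j ≤ upperBound B h q θ j) :
    (∀ i, mulVec B (mulVec (kstar B) u) i ⊔ g i ≤ mulVec (kstar B) u i) ∧
      (∀ i, mulVec (kstar B) u i ≤ h i) ∧
      cdot (mulVec (kstar B) u) p ⊔ cdot q (mulVec (kstar B) u) ≤ θ := by
  have hlow : ∀ j, g j ⊔ (tinv θ + p j) ≤ mulVec (kstar B) u j :=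
    fun j => (hu j).1.trans (le_kstar_mulVec B u j)
  obtain ⟨hKh, hKq⟩ := (le_upperBound_iff hh hθ).mp fun j => (hu j).2
  refine ⟨fun i => sup_le (mulVec_kstar_mulVec_le hB u i) (le_sup_left.trans (hlow i)), hKh,
    sup_le ((cdot_le_iff_tinv_add_le hx hθ).mpr fun j => le_sup_right.trans (hlow j)) hKq⟩

lemma mem_sandwich_of_objective_le (hh : Reg h) (hθ : θ ≠ ⊥) (hx : Reg x)
    (hBx : ∀ i, mulVec B x i ⊔ g i ≤ x i) (hxh : ∀ i, x i ≤ h i)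
    (hf : cdot x p ⊔ cdot q x ≤ θ) :
    x = mulVec (kstar B) x ∧ ∀ j, g j ⊔ (tinv θ + p j) ≤ x j ∧ x j ≤ upperBound B h q θ j := by
  have hKx := kstar_mulVec_eq_self B fun i => le_sup_left.trans (hBx i)
  have hxR := (le_upperBound_iff (u := x) hh hθ).mpr ⟨hKx ▸ hxh, hKx ▸ le_sup_right.trans hf⟩
  exact ⟨hKx.symm, fun j => ⟨sup_le (le_sup_right.trans (hBx j))
    ((cdot_le_iff_tinv_add_le hx hθ).mp (le_sup_left.trans hf) j), hxR j⟩⟩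

end Problem

end MaxPlus

open MaxPlus

/-- minimization of `x⁻ p ⊕ q⁻ x` subject to `B x ⊕ g ≤ x`, `x ≤ h`. -/
theorem stmt_2 {n : ℕ} (B : Matrix (Fin n) (Fin n) (WithBot ℝ)) (hB : TrOp B ≤ 0)
    (p : Fin n → WithBot ℝ) (hp : ∃ i, p i ≠ ⊥)
    (q h : Fin n → WithBot ℝ) (hq : Reg q) (hh : Reg h)
    (g : Fin n → WithBot ℝ) (hg : cdot h (mulVec (kstar B) g) ≤ 0)
    (θ : WithBot ℝ)
    (hθ : θ = trt (cdot q (mulVec (kstar B) p)) 2 ⊔ cdot h (mulVec (kstar B) p)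
        ⊔ cdot q (mulVec (kstar B) g)) :
    IsLeast {v | ∃ x : Fin n → WithBot ℝ, Reg x ∧ (∀ i, mulVec B x i ⊔ g i ≤ x i) ∧
        (∀ i, x i ≤ h i) ∧ cdot x p ⊔ cdot q x = v} θ ∧
      ∀ x : Fin n → WithBot ℝ, Reg x → (∀ i, mulVec B x i ⊔ g i ≤ x i) → (∀ i, x i ≤ h i) →
        (cdot x p ⊔ cdot q x = θ ↔
          ∃ u : Fin n → WithBot ℝ, x = mulVec (kstar B) u ∧
            ∀ j, g j ⊔ (tinv θ + p j) ≤ u j ∧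
              u j ≤ tinv (Finset.univ.sup fun i =>
                (tinv (h i) ⊔ (tinv θ + tinv (q i))) + kstar B i j)) := by
  obtain ⟨i₀, hp₀⟩ := hp
  have hS : cdot q (mulVec (kstar B) p) ≤ θ + θ :=
    trt_two_le_iff.mp (hθ ▸ le_sup_left.trans le_sup_left)
  have hθ_ne : θ ≠ ⊥ := by
    rintro rfl
    exact cdot_ne_bot hq (ne_bot_of_le_ne_bot hp₀ (le_kstar_mulVec B p i₀)) (by simpa using hS)
  have lower : ∀ x, Reg x → (∀ i, mulVec B x i ⊔ g i ≤ x i) → (∀ i, x i ≤ h i) →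
      θ ≤ cdot x p ⊔ cdot q x :=
    fun x hx hBx hxh => hθ ▸ le_objective_of_feasible hx hBx hxh
  have hR := sup_tinv_add_le_upperBound hh hθ_ne hg (hθ ▸ le_sup_right.trans le_sup_left)
    (hθ ▸ le_sup_right) hS
  set R := upperBound B h q θ
  have hR_reg : Reg (mulVec (kstar B) R) :=
    fun i => ne_bot_of_le_ne_bot (upperBound_ne_bot hh i) (le_kstar_mulVec B R i)
  obtain ⟨hR_sub, hR_le, hR_obj⟩ :=
    feasible_of_mem_sandwich hB hh hθ_ne hR_reg fun j => ⟨hR j, le_rfl⟩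
  refine ⟨⟨⟨_, hR_reg, hR_sub, hR_le, le_antisymm hR_obj (lower _ hR_reg hR_sub hR_le)⟩, ?_⟩,
    fun x hx hBx hxh => ⟨fun hf => ⟨x, mem_sandwich_of_objective_le hh hθ_ne hx hBx hxh hf.le⟩, ?_⟩⟩
  · rintro v ⟨x, hx, hBx, hxh, rfl⟩
    exact lower x hx hBx hxh
  · rintro ⟨u, rfl, hu⟩
    exact le_antisymm (feasible_of_mem_sandwich hB hh hθ_ne hx hu).2.2 (lower _ hx hBx hxh)
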